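/- arXiv:math/0510633 — 3 statements merged into one kernel-verified Lean document; each statement's English description precedes it below -/
import Mathlib

section
/- Let X be a set, h : X → ℝ, and (f_i)_{i≥1} a sequence of maps f_i : X → X. Suppose there are integers d_i ≥ 2 and a constant c ≥ 0 such that |h(f_i(x))/d_i − h(x)| ≤ c for all i and all x ∈ X. Then for every x ∈ X, the sequence h_n(x) := h(f_n ∘ ⋯ ∘ f_1(x)) / (d_1⋯d_n) is a Cauchy sequence. -/
open Filter Finset

/-- `orbitFrom f k n x = f (k+n) (⋯ (f (k+1) x))`, the composite applying `f (k+1)` first. -/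
def orbitFrom {X : Type*} (f : ℕ → X → X) (k : ℕ) : ℕ → X → X
  | 0 => fun x => x
  | n + 1 => fun x => f (k + n + 1) (orbitFrom f k n x)

/-- `prodFrom d k n = d (k+1) * ⋯ * d (k+n)`. -/
def prodFrom (d : ℕ → ℕ) (k n : ℕ) : ℕ := ∏ i ∈ Finset.range n, d (k + i + 1)

/-!
The quotients `h (f_n ⋯ f_1 x) / (d_1 ⋯ d_n)` telescope: consecutive terms differ by
`(h (f_{n+1} y) / d_{n+1} - h y) / (d_1 ⋯ d_n)` with `y = f_n ⋯ f_1 x`, which is at most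
`c / 2^n` in absolute value since every `d_i ≥ 2`. Geometric decay of the steps gives Cauchy.
-/

theorem prodFrom_succ (d : ℕ → ℕ) (k n : ℕ) :
    prodFrom d k (n + 1) = prodFrom d k n * d (k + n + 1) :=
  prod_range_succ _ _

theorem two_pow_le_prodFrom {d : ℕ → ℕ} (hd : ∀ i, 2 ≤ d i) (k n : ℕ) :
    2 ^ n ≤ prodFrom d k n := by
  simpa [prodFrom] using prod_le_prod' (s := range n) fun i _ => hd (k + i + 1)

theorem abs_div_mul_sub_div_le {a b p q c : ℝ} (hp : 0 < p) (hq : 0 < q)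
    (hab : |b / q - a| ≤ c) : |b / (p * q) - a / p| ≤ c / p := by
  have : b / (p * q) - a / p = (b / q - a) / p := by field_simp
  rw [this, abs_div, abs_of_pos hp]
  exact div_le_div_of_nonneg_right hab hp.le

theorem dist_div_prodFrom_succ_le {X : Type*} {h : X → ℝ} {f : ℕ → X → X} {d : ℕ → ℕ}
    (hd : ∀ i, 2 ≤ d i) {c : ℝ} (hb : ∀ i x, |h (f i x) / (d i : ℝ) - h x| ≤ c)
    (k n : ℕ) (x : X) :
    dist (h (orbitFrom f k n x) / prodFrom d k n)
      (h (orbitFrom f k (n + 1) x) / prodFrom d k (n + 1)) ≤ c * (1 / 2) ^ n := by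
  have hc : 0 ≤ c := (abs_nonneg _).trans (hb 0 x)
  have hpow : (2 : ℝ) ^ n ≤ prodFrom d k n := by exact_mod_cast two_pow_le_prodFrom hd k n
  have hd_pos : (0 : ℝ) < d (k + n + 1) := by exact_mod_cast (hd _).trans_lt' two_pos
  have hstep := abs_div_mul_sub_div_le ((pow_pos two_pos n).trans_le hpow) hd_pos
    (hb (k + n + 1) (orbitFrom f k n x))
  rw [Real.dist_eq, abs_sub_comm, prodFrom_succ, Nat.cast_mul, one_div_pow, ← div_eq_mul_one_div]
  exact hstep.trans (div_le_div_of_nonneg_left hc (pow_pos two_pos n) hpow)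

theorem stmt0_general {X : Type*} (h : X → ℝ) (f : ℕ → X → X) (d : ℕ → ℕ)
    (hd : ∀ i, 2 ≤ d i) (c : ℝ)
    (hb : ∀ i x, |h (f i x) / (d i : ℝ) - h x| ≤ c) (x : X) :
    CauchySeq (fun n => h (orbitFrom f 0 n x) / (prodFrom d 0 n : ℝ)) :=
  cauchySeq_of_le_geometric (1 / 2) c (by norm_num) (dist_div_prodFrom_succ_le hd hb 0 · x)

theorem stmt0 {X : Type*} (h : X → ℝ) (f : ℕ → X → X) (d : ℕ → ℕ)
    (hd : ∀ i, 2 ≤ d i) (c : ℝ) (hc : 0 ≤ c)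
    (hb : ∀ i x, |h (f i x) / (d i : ℝ) - h x| ≤ c) (x : X) :
    CauchySeq (fun n => h (orbitFrom f 0 n x) / (prodFrom d 0 n : ℝ)) :=
  stmt0_general h f d hd c hb x
end

section
/- Let X be a set, h : X → ℝ, (f_i) self-maps of X with integers d_i ≥ 2 and uniform bound c on |h(f_i(x))/d_i − h(x)|. If x ∈ X has ĥ(x) > 0 for the canonical height ĥ, then h(f_n ∘ ⋯ ∘ f_1(x)) → +∞ as n → ∞; in particular the set {h(f_n∘⋯∘f_1(x)) : n ≥ 1} is unbounded, so the forward orbit {x, f_1(x), f_2(f_1(x)), …} of x is infinite. -/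
open Filter Finset

theorem stmt6 {X : Type*} (h : X → ℝ) (f : ℕ → X → X) (d : ℕ → ℕ)
    (hd : ∀ i, 2 ≤ d i) (c : ℝ) (hc : 0 ≤ c)
    (hb : ∀ i x, |h (f i x) / (d i : ℝ) - h x| ≤ c) (x : X) (L : ℝ) (hLpos : 0 < L)
    (hL : Tendsto (fun n => h (orbitFrom f 0 n x) / (prodFrom d 0 n : ℝ)) atTop (nhds L)) :
    Tendsto (fun n => h (orbitFrom f 0 n x)) atTop atTop ∧
    ¬ BddAbove {r : ℝ | ∃ n, 1 ≤ n ∧ r = h (orbitFrom f 0 n x)} ∧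
    (Set.range fun n => orbitFrom f 0 n x).Infinite := by
  have hPpos : ∀ n, (0:ℝ) < (prodFrom d 0 n : ℝ) := by
    intro n
    have : 0 < prodFrom d 0 n := by
      apply Finset.prod_pos
      intro i _
      exact lt_of_lt_of_le (by norm_num) (hd _)
    exact_mod_cast this
  have hPge : ∀ n, (2:ℕ)^n ≤ prodFrom d 0 n := by
    intro n
    calc (2:ℕ)^n = ∏ _i ∈ Finset.range n, 2 := by simp
    _ ≤ ∏ i ∈ Finset.range n, d (0 + i + 1) := Finset.prod_le_prod' fun i _ => hd _
  have hPt : Tendsto (fun n => (prodFrom d 0 n : ℝ)) atTop atTop := by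
    apply tendsto_atTop_mono (fun n => ?_)
      (tendsto_pow_atTop_atTop_of_one_lt (one_lt_two : (1:ℝ) < 2))
    have := hPge n
    calc (2:ℝ)^n = ((2^n : ℕ) : ℝ) := by push_cast; ring
    _ ≤ (prodFrom d 0 n : ℝ) := by exact_mod_cast this
  have h1 : Tendsto (fun n => h (orbitFrom f 0 n x)) atTop atTop := by
    have := hL.pos_mul_atTop hLpos hPt
    refine this.congr fun n => div_mul_cancel₀ _ (ne_of_gt (hPpos n))
  refine ⟨h1, ?_, ?_⟩
  · rintro ⟨M, hM⟩
    obtain ⟨n, hn1, hn2⟩ := ((h1.eventually_gt_atTop M).and (eventually_ge_atTop 1)).exists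
    exact absurd (hM ⟨n, hn2, rfl⟩) (not_le.mpr hn1)
  · by_contra hfin
    have hfin' : (h '' Set.range fun n => orbitFrom f 0 n x).Finite :=
      (Set.not_infinite.mp hfin).image h
    obtain ⟨M, hM⟩ := hfin'.bddAbove
    obtain ⟨n, hn⟩ := (h1.eventually_gt_atTop M).exists
    exact absurd (hM ⟨_, ⟨n, rfl⟩, rfl⟩) (not_le.mpr hn)
end

section
/- Let X be a set, h : X → ℝ with the Northcott property (every sublevel set {y : h(y) ≤ M} is finite), and let c ≥ 0. Then the set of points x ∈ X for which there exists a sequence (f_i) of self-maps of X with integers d_i ≥ 2 and sup_{i,y} |h(f_i(y))/d_i − h(y)| ≤ c such that x has finite forward orbit under (f_i), is finite. In fact this set is contained in {y ∈ X : h(y) ≤ 2c}. -/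
open Filter Finset

/-!
A point of height `h x > 2c` escapes: `h (f y) ≥ d (h y - c) ≥ 2 (h y - c)` says that the excess
`h - 2c` at least doubles at each step, so it grows like `2ⁿ (h x - 2c)` along the orbit. A finite
orbit has bounded height, hence every point with a finite orbit has height at most `2c`, and by
the Northcott property there are only finitely many of them.
-/

theorem two_mul_sub_le_of_abs_div_sub_le {a b c d : ℝ} (hd : 2 ≤ d) (hb : |b / d - a| ≤ c)
    (ha : c ≤ a) : 2 * (a - 2 * c) ≤ b - 2 * c := by
  have hd₀ : 0 < d := by linarith
  have h_div : a - c ≤ b / d := by linarith [(abs_le.mp hb).1]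
  have h_mul : d * (a - c) ≤ b := by rwa [le_div_iff₀ hd₀, mul_comm] at h_div
  nlinarith

theorem pow_mul_le_height_orbitFrom_sub {X : Type*} {h : X → ℝ} {f : ℕ → X → X} {d : ℕ → ℝ}
    {c : ℝ} (hc : 0 ≤ c) (hd : ∀ i, 2 ≤ d i) (hf : ∀ i y, |h (f i y) / d i - h y| ≤ c)
    {x : X} (hx : 2 * c ≤ h x) (k n : ℕ) :
    2 ^ n * (h x - 2 * c) ≤ h (orbitFrom f k n x) - 2 * c := by
  induction n with
  | zero => simp [orbitFrom]
  | succ n ih =>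
    have h_excess : 0 ≤ 2 ^ n * (h x - 2 * c) := by
      have : 0 ≤ h x - 2 * c := by linarith
      positivity
    calc 2 ^ (n + 1) * (h x - 2 * c) = 2 * (2 ^ n * (h x - 2 * c)) := by ring
      _ ≤ 2 * (h (orbitFrom f k n x) - 2 * c) := by linarith
      _ ≤ h (orbitFrom f k (n + 1) x) - 2 * c :=
        two_mul_sub_le_of_abs_div_sub_le (hd _) (hf _ _) (by linarith)

theorem height_le_of_finite_range_orbitFrom {X : Type*} {h : X → ℝ} {f : ℕ → X → X}
    {d : ℕ → ℝ} {c : ℝ} (hc : 0 ≤ c) (hd : ∀ i, 2 ≤ d i)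
    (hf : ∀ i y, |h (f i y) / d i - h y| ≤ c) {x : X} (k : ℕ)
    (hfin : (Set.range fun n => orbitFrom f k n x).Finite) : h x ≤ 2 * c := by
  by_contra! hx
  obtain ⟨B, hB⟩ := (hfin.image h).bddAbove
  have h_pos : 0 < h x - 2 * c := by linarith
  obtain ⟨n, hn⟩ := pow_unbounded_of_one_lt ((B - 2 * c) / (h x - 2 * c)) one_lt_two
  rw [div_lt_iff₀ h_pos] at hn
  have h_orbit := pow_mul_le_height_orbitFrom_sub hc hd hf hx.le k n
  have h_bdd : h (orbitFrom f k n x) ≤ B := hB ⟨_, ⟨n, rfl⟩, rfl⟩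
  linarith

theorem stmt8 {X : Type*} (h : X → ℝ)
    (hNorthcott : ∀ M : ℝ, {y : X | h y ≤ M}.Finite) (c : ℝ) (hc : 0 ≤ c) :
    {x : X | ∃ (f : ℕ → X → X) (d : ℕ → ℕ), (∀ i, 2 ≤ d i) ∧
        (∀ i y, |h (f i y) / (d i : ℝ) - h y| ≤ c) ∧
        (Set.range fun n => orbitFrom f 0 n x).Finite} ⊆ {y : X | h y ≤ 2 * c} ∧
    {x : X | ∃ (f : ℕ → X → X) (d : ℕ → ℕ), (∀ i, 2 ≤ d i) ∧
        (∀ i y, |h (f i y) / (d i : ℝ) - h y| ≤ c) ∧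
        (Set.range fun n => orbitFrom f 0 n x).Finite}.Finite := by
  refine (fun hsub => ⟨hsub, (hNorthcott (2 * c)).subset hsub⟩) ?_
  rintro x ⟨f, d, hd, hf, hfin⟩
  exact height_le_of_finite_range_orbitFrom hc (fun i => by exact_mod_cast hd i) hf 0 hfin
end
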